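/- Exact-form reduction of the scalar q-ODE (identity (3.13) of the paper): if u:[0,T]→ℂ satisfies D_q u(t) + λ υ(t) u(t) = f(t) for all t ∈ (0,T], then D_q[Γ_{υ,λ}·u](t) = Γ_{υ,λ}(qt) f(t) for all t ∈ (0,T], where D_q g(t) = (g(t)−g(qt))/((1−q)t). -/

import Mathlib

open scoped BigOperators InnerProductSpace

noncomputable def qDeriv (q : ℝ) (f : ℝ → ℝ) (t : ℝ) : ℝ :=
  (f t - f (q * t)) / ((1 - q) * t)

noncomputable def qDerivC (q : ℝ) (f : ℝ → ℂ) (t : ℝ) : ℂ :=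
  (f t - f (q * t)) / (((1 - q) * t : ℝ) : ℂ)

noncomputable def jacksonIntegral (q x : ℝ) (f : ℝ → ℝ) : ℝ :=
  (1 - q) * x * ∑' m : ℕ, q ^ m * f (q ^ m * x)

noncomputable def jacksonIntegralC (q x : ℝ) (f : ℝ → ℂ) : ℂ :=
  (((1 - q) * x : ℝ) : ℂ) * ∑' m : ℕ, (q : ℂ) ^ m * f (q ^ m * x)

noncomputable def qGamma (q lam : ℝ) (v : ℝ → ℝ) (t : ℝ) : ℝ :=
  ∏' i : ℕ, (1 + (1 - q) * lam * q ^ i * t * v (q ^ i * t))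

noncomputable def qFact (q : ℝ) (k : ℕ) : ℝ :=
  ∏ j ∈ Finset.range k, ((1 - q ^ (j + 1)) / (1 - q))

noncomputable def qExp (q x : ℝ) : ℝ :=
  ∑' k : ℕ, q ^ (k * (k - 1) / 2) * x ^ k / qFact q k

noncomputable def qDerivH (q : ℝ) {H : Type*} [NormedAddCommGroup H] [NormedSpace ℂ H]
    (u : ℝ → H) (t : ℝ) : H :=
  (((1 - q) * t)⁻¹ : ℝ) • (u t - u (q * t))

noncomputable def sobNormSq {H : Type*} [NormedAddCommGroup H] [InnerProductSpace ℂ H]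
    {I : Type*} (e : HilbertBasis I ℂ H) (lam : I → ℝ) (d : ℝ) (u : H) : ℝ :=
  ∑' k, lam k ^ d * ‖⟪e k, u⟫_ℂ‖ ^ 2

def sobMem {H : Type*} [NormedAddCommGroup H] [InnerProductSpace ℂ H]
    {I : Type*} (e : HilbertBasis I ℂ H) (lam : I → ℝ) (d : ℝ) (u : H) : Prop :=
  Summable (fun k => lam k ^ d * ‖⟪e k, u⟫_ℂ‖ ^ 2)

/-!
Peeling off the first factor of the infinite product gives the functional equation
`Γ(t) = (1 + (1 - q) λ t υ(t)) Γ(qt)`, i.e. `D_q Γ(t) = λ υ(t) Γ(qt)`. Combined with the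
q-Leibniz rule `D_q(Γ u)(t) = Γ(qt) D_q u(t) + D_q Γ(t) u(t)` this turns the left-hand side into
`Γ(qt) (D_q u(t) + λ υ(t) u(t)) = Γ(qt) f(t)`. The product converges because its factors differ
from `1` by `O(qⁱ)` as soon as `υ` is bounded along the orbit `qⁱ t`.
-/

theorem qDerivC_mul (q : ℝ) (g u : ℝ → ℂ) (t : ℝ) :
    qDerivC q (fun s => g s * u s) t = g (q * t) * qDerivC q u t + qDerivC q g t * u t := by
  simp only [qDerivC]
  ring

theorem multipliable_qGamma_factors {q lam t C : ℝ} {v : ℝ → ℝ} (hq : |q| < 1)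
    (hv : ∀ i : ℕ, |v (q ^ i * t)| ≤ C) :
    Multipliable (fun i : ℕ => 1 + (1 - q) * lam * q ^ i * t * v (q ^ i * t)) := by
  have hgeom := (summable_geometric_of_lt_one (abs_nonneg q) hq).mul_left (|(1 - q) * lam * t| * C)
  refine Real.multipliable_one_add_of_summable (hgeom.of_norm_bounded fun i => ?_)
  calc ‖(1 - q) * lam * q ^ i * t * v (q ^ i * t)‖
      = |(1 - q) * lam * t| * |v (q ^ i * t)| * |q| ^ i := by
        rw [Real.norm_eq_abs, ← abs_pow, ← abs_mul, ← abs_mul]; ring_nf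
    _ ≤ |(1 - q) * lam * t| * C * |q| ^ i := by gcongr; exact hv i

theorem qGamma_eq_mul_qGamma_mul {q lam t : ℝ} {v : ℝ → ℝ}
    (h : Multipliable (fun i : ℕ => 1 + (1 - q) * lam * q ^ i * (q * t) * v (q ^ i * (q * t)))) :
    qGamma q lam v t = (1 + (1 - q) * lam * t * v t) * qGamma q lam v (q * t) := by
  have shift : ∀ i : ℕ, 1 + (1 - q) * lam * q ^ (i + 1) * t * v (q ^ (i + 1) * t)
      = 1 + (1 - q) * lam * q ^ i * (q * t) * v (q ^ i * (q * t)) := fun i => by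
    rw [pow_succ, mul_assoc (q ^ i) q t]; ring
  unfold qGamma
  rw [tprod_eq_zero_mul' (h.congr fun i => (shift i).symm), tprod_congr shift]
  simp only [pow_zero, one_mul, mul_one]

theorem qDerivC_qGamma {q lam t : ℝ} {v : ℝ → ℝ} (hq : q ≠ 1) (ht : t ≠ 0)
    (h : Multipliable (fun i : ℕ => 1 + (1 - q) * lam * q ^ i * (q * t) * v (q ^ i * (q * t)))) :
    qDerivC q (fun s => (qGamma q lam v s : ℂ)) t
      = ((lam * v t : ℝ) : ℂ) * qGamma q lam v (q * t) := by
  have hd : (((1 - q) * t : ℝ) : ℂ) ≠ 0 := by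
    exact_mod_cast mul_ne_zero (sub_ne_zero.2 hq.symm) ht
  rw [qDerivC, qGamma_eq_mul_qGamma_mul h, div_eq_iff hd]
  push_cast
  ring

theorem exact_form_reduction_general
    (q T α β lam : ℝ) (v : ℝ → ℝ) (u f : ℝ → ℂ)
    (hq0 : 0 < q) (hq1 : q < 1)
    (hv : ∀ t ∈ Set.Icc (0 : ℝ) T, α ≤ v t ∧ v t ≤ β)
    (hu : ∀ t ∈ Set.Ioc (0 : ℝ) T,
      qDerivC q u t + ((lam * v t : ℝ) : ℂ) * u t = f t) :
    ∀ t ∈ Set.Ioc (0 : ℝ) T,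
      qDerivC q (fun s => ((qGamma q lam v s : ℝ) : ℂ) * u s) t
        = ((qGamma q lam v (q * t) : ℝ) : ℂ) * f t := by
  intro t ht
  have hbound : ∀ i : ℕ, |v (q ^ i * (q * t))| ≤ max |α| |β| := fun i => by
    have hle : q ^ i * (q * t) ≤ T := calc
      q ^ i * (q * t) = q ^ (i + 1) * t := by ring
      _ ≤ t := mul_le_of_le_one_left ht.1.le (pow_le_one₀ hq0.le hq1.le)
      _ ≤ T := ht.2
    obtain ⟨hα, hβ⟩ := hv _ ⟨by positivity [ht.1], hle⟩
    exact abs_le_max_abs_abs hα hβ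
  have hmult := multipliable_qGamma_factors (lam := lam) (abs_lt.2 ⟨by linarith, hq1⟩) hbound
  rw [qDerivC_mul, qDerivC_qGamma hq1.ne ht.1.ne' hmult, ← hu t ht]
  ring

/-- Exact-form reduction of the scalar q-ODE (identity (3.13) of the paper): if
`u : [0,T] → ℂ` satisfies `D_q u(t) + λ υ(t) u(t) = f(t)` for all `t ∈ (0,T]`, then
`D_q[Γ_{υ,λ}·u](t) = Γ_{υ,λ}(qt) f(t)` for all `t ∈ (0,T]`. -/
theorem exact_form_reduction
    (q T α β lam : ℝ) (v : ℝ → ℝ) (u f : ℝ → ℂ)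
    (hq0 : 0 < q) (hq1 : q < 1)
    (hvcont : ContinuousOn v (Set.Icc 0 T))
    (hα : 0 < α)
    (hv : ∀ t ∈ Set.Icc (0 : ℝ) T, α ≤ v t ∧ v t ≤ β)
    (hlam : 0 < lam)
    (hu : ∀ t ∈ Set.Ioc (0 : ℝ) T,
      qDerivC q u t + ((lam * v t : ℝ) : ℂ) * u t = f t) :
    ∀ t ∈ Set.Ioc (0 : ℝ) T,
      qDerivC q (fun s => ((qGamma q lam v s : ℝ) : ℂ) * u s) t
        = ((qGamma q lam v (q * t) : ℝ) : ℂ) * f t :=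
  exact_form_reduction_general q T α β lam v u f hq0 hq1 hv hu
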